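/- arXiv:2304.01463 — 5 statements merged into one kernel-verified Lean document; each statement's English description precedes it below -/
import Mathlib

section
/- The Hamming weight of the i-th row (1 ≤ i ≤ 2^n) of the n-th Kronecker power G_n = F^{⊗n} of F = [[1,0],[1,1]] over 𝔽₂ equals 2^s, where s is the number of ones in the binary representation of i−1. -/
/-!
Column `j` of row `i` is nonzero exactly when the set of binary digits of `j` is contained in
that of `i`. Sending a number to its set of bit positions is a bijection `ℕ ≃ Finset ℕ`, so the
support of row `i` corresponds to the subsets of the `s` bit positions of `i`, of which there
are `2 ^ s`.
-/

/-- `G_n = F^{⊗n}` for `F = [[1,0],[1,1]]` over `𝔽₂` (0-indexed):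
entry `(i,j)` is `1` iff the binary digits of `j` are a subset of those of `i`. -/
def polarG (n : ℕ) : Matrix (Fin (2^n)) (Fin (2^n)) (ZMod 2) :=
  Matrix.of fun i j => if j.val &&& i.val = j.val then 1 else 0

/-- Hamming weight of a binary vector. -/
def wt {N : ℕ} (v : Fin N → ZMod 2) : ℕ :=
  (Finset.univ.filter fun j => v j ≠ 0).card

open Finset

namespace Nat

theorem land_eq_left_iff_testBit_imp {j i : ℕ} :
    j &&& i = j ↔ ∀ k, j.testBit k → i.testBit k := by
  constructor
  · intro h k hk
    rw [← h, testBit_and, Bool.and_eq_true] at hk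
    exact hk.2
  · intro h
    refine eq_of_testBit_eq fun k => ?_
    rw [testBit_and]
    cases hj : j.testBit k
    · rfl
    · rw [h k hj, Bool.and_true]

theorem sum_digits_two_bit (b : Bool) (n : ℕ) :
    (digits 2 (bit b n)).sum = b.toNat + (digits 2 n).sum := by
  rcases (bit b n).eq_zero_or_pos with h | h
  · obtain ⟨rfl, rfl⟩ : n = 0 ∧ b = false := by simpa using h
    simp
  · rw [digits_def' one_lt_two h, List.sum_cons, bit_mod_two, bit_div_two]

theorem length_bitIndices (n : ℕ) : n.bitIndices.length = (digits 2 n).sum := by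
  induction n using binaryRec with
  | zero => simp
  | bit b n ih =>
    cases b
    · rw [bitIndices_bit_false, List.length_map, sum_digits_two_bit, ih]
      exact (zero_add _).symm
    · rw [bitIndices_bit_true, List.length_cons, List.length_map, sum_digits_two_bit, ih]
      exact add_comm _ _

def submasks (i : ℕ) : Finset ℕ :=
  i.bitIndices.toFinset.powerset.map equivBitIndices.symm.toEmbedding

theorem mem_submasks {i j : ℕ} : j ∈ submasks i ↔ j &&& i = j := by
  simp [submasks, land_eq_left_iff_testBit_imp, subset_iff]

theorem card_submasks (i : ℕ) : #(submasks i) = 2 ^ (digits 2 i).sum := by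
  rw [submasks, card_map, card_powerset, List.toFinset_card_of_nodup bitIndices_nodup,
    length_bitIndices]

theorem card_filter_fin_land_eq_left {N i : ℕ} (hi : i < N) :
    #{j : Fin N | j.val &&& i = j.val} = 2 ^ (digits 2 i).sum := by
  have hmap : ({j : Fin N | j.val &&& i = j.val} : Finset _).map Fin.valEmbedding = submasks i := by
    ext j
    simp only [mem_map, mem_filter, mem_univ, true_and, Fin.valEmbedding_apply, mem_submasks]
    constructor
    · rintro ⟨j, hj, rfl⟩
      exact hj
    · intro hj
      exact ⟨⟨j, (hj ▸ and_le_right).trans_lt hi⟩, hj, rfl⟩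
  rw [← card_submasks, ← hmap, card_map]

end Nat

/-- Rows are 0-indexed: `i` here is row `i + 1` of `G_n`. -/
theorem stmt0 (n : ℕ) (i : Fin (2^n)) :
    wt (polarG n i) = 2 ^ (Nat.digits 2 i.val).sum := by
  rw [← Nat.card_filter_fin_land_eq_left i.isLt]
  simp [wt, polarG]
end

section
/- Let G_n = F^{⊗n} with rows g_1,…,g_N (N = 2^n). For 1 ≤ m ≤ N−1 and 1 ≤ k ≤ N with k + m > N, the row g_k is invariant under the sum of cyclic shifts prescribed by row m+1: g_k = g_k ∑_{l : g_{m+1, l+1} = 1, 1 ≤ l ≤ N−1} C_N^l. -/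
/-- The `N×N` clockwise cyclic shift matrix by `j` places over `𝔽₂`. -/
def cyc (N j : ℕ) : Matrix (Fin N) (Fin N) (ZMod 2) :=
  Matrix.of fun i k => if (i.val + j) % N = k.val then 1 else 0

theorem Nat.and_eq_left_iff_mod_two_le_and_div_two (a b : ℕ) :
    a &&& b = a ↔ a % 2 ≤ b % 2 ∧ a / 2 &&& b / 2 = a / 2 := by
  rw [← Nat.and_div_two]
  have hmod := @Nat.and_mod_two_eq_one a b
  constructor
  · intro h
    rw [h] at hmod
    exact ⟨by omega, by rw [h]⟩
  · rintro ⟨hle, hdiv⟩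
    have := Nat.div_add_mod (a &&& b) 2
    have := Nat.div_add_mod a 2
    omega

/-- Lucas's theorem for `p = 2`. -/
theorem Nat.cast_choose_zmod_two (a b : ℕ) :
    (b.choose a : ZMod 2) = if a &&& b = a then 1 else 0 := by
  induction a using Nat.strong_induction_on generalizing b with
  | _ a ih =>
    rcases Nat.eq_zero_or_pos a with rfl | ha
    · simp
    have hlucas : (b.choose a : ZMod 2) = (b % 2).choose (a % 2) * (b / 2).choose (a / 2) := by
      exact_mod_cast (ZMod.natCast_eq_natCast_iff _ _ 2).mpr
        (@Choose.choose_modEq_choose_mod_mul_choose_div_nat b a 2 ⟨Nat.prime_two⟩)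
    have hdigit : (b % 2).choose (a % 2) = if a % 2 ≤ b % 2 then 1 else 0 := by
      rcases Nat.mod_two_eq_zero_or_one a with h | h <;>
        rcases Nat.mod_two_eq_zero_or_one b with h' | h' <;> simp [h, h']
    rw [hlucas, ih (a / 2) (Nat.div_lt_self ha one_lt_two), hdigit]
    simp only [Nat.and_eq_left_iff_mod_two_le_and_div_two a b]
    split_ifs <;> simp_all

theorem polarG_apply_eq_choose (n : ℕ) (i j : Fin (2 ^ n)) :
    polarG n i j = (i.val.choose j.val : ZMod 2) := by
  rw [Nat.cast_choose_zmod_two]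
  rfl

open Finset

theorem vecMul_cyc {N : ℕ} [NeZero N] (v : Fin N → ZMod 2) (l x : Fin N) :
    Matrix.vecMul v (cyc N l) x = v (x - l) := by
  have hcyc : ∀ i, cyc N l i x = if i = x - l then 1 else 0 := by
    intro i
    simp only [cyc, Matrix.of_apply, ← Fin.val_add, ← Fin.ext_iff, eq_sub_iff_add_eq]
  simp [Matrix.vecMul, dotProduct, hcyc]

/-- The terms `l > x` wrap around and contribute the coefficient of `X^(x + N)`. -/
theorem sum_choose_mul_choose_cyclic {N m k x : ℕ} (hm : m < N) (hk : k < N) (hx : x < N) :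
    ∑ l ∈ range N, m.choose l * k.choose ((N - l + x) % N) =
      (m + k).choose x + (m + k).choose (x + N) := by
  have hterm : ∀ l ∈ range N, m.choose l * k.choose ((N - l + x) % N) =
      m.choose l * k.choose (x + N - l) + if l ≤ x then m.choose l * k.choose (x - l) else 0 := by
    intro l hl
    rw [mem_range] at hl
    split_ifs with hlx
    · rw [Nat.choose_eq_zero_of_lt (by omega : k < x + N - l),
        show N - l + x = N + (x - l) by omega, Nat.add_mod_left, Nat.mod_eq_of_lt (by omega)]
      ring
    · rw [Nat.mod_eq_of_lt (by omega), add_zero, show N - l + x = x + N - l by omega]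
  have hlow : ∑ l ∈ range N, (if l ≤ x then m.choose l * k.choose (x - l) else 0) =
      (m + k).choose x := by
    rw [← sum_filter, Nat.add_choose_eq, Finset.Nat.sum_antidiagonal_eq_sum_range_succ_mk]
    congr 1
    ext l
    simp only [mem_filter, mem_range]
    omega
  have hhigh : ∑ l ∈ range N, m.choose l * k.choose (x + N - l) = (m + k).choose (x + N) := by
    rw [Nat.add_choose_eq, Finset.Nat.sum_antidiagonal_eq_sum_range_succ_mk]
    refine sum_subset (range_subset_range.mpr (by omega)) fun l _ hl => ?_
    rw [Nat.choose_eq_zero_of_lt (by simp at hl; omega), zero_mul]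
  rw [sum_congr rfl hterm, sum_add_distrib, hlow, hhigh, add_comm]

theorem cast_choose_two_pow_add (n r j : ℕ) :
    ((2 ^ n + r).choose j : ZMod 2) =
      r.choose j + if 2 ^ n ≤ j then (r.choose (j - 2 ^ n) : ZMod 2) else 0 := by
  have : Fact (Nat.Prime 2) := ⟨Nat.prime_two⟩
  rw [← Polynomial.coeff_X_add_one_pow, pow_add, add_pow_char_pow, one_pow, add_mul, one_mul,
    Polynomial.coeff_add, Polynomial.coeff_X_pow_mul', add_comm]
  simp only [Polynomial.coeff_X_add_one_pow]

theorem sum_cast_choose_mul_choose_cyclic_eq_zero {n m k x : ℕ} (hm : m < 2 ^ n) (hk : k < 2 ^ n)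
    (hx : x < 2 ^ n) (hmk : 2 ^ n ≤ m + k) :
    ∑ l ∈ range (2 ^ n), ((m.choose l * k.choose ((2 ^ n - l + x) % 2 ^ n) : ℕ) : ZMod 2) =
      0 := by
  obtain ⟨r, hr⟩ := Nat.exists_eq_add_of_le hmk
  rw [← Nat.cast_sum, sum_choose_mul_choose_cyclic hm hk hx, hr, Nat.cast_add,
    cast_choose_two_pow_add, cast_choose_two_pow_add, if_neg (not_le.2 hx), if_pos le_add_self,
    Nat.add_sub_cancel, Nat.choose_eq_zero_of_lt (by omega : r < x + 2 ^ n), Nat.cast_zero,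
    add_zero, zero_add, CharTwo.add_self_eq_zero]

theorem sum_polarG_mul_polarG_sub_eq_zero {n : ℕ} (i j x : Fin (2 ^ n))
    (hij : 2 ^ n ≤ i.val + j.val) : ∑ l, polarG n i l * polarG n j (x - l) = 0 := by
  simp only [polarG_apply_eq_choose, Fin.val_sub]
  exact_mod_cast (Fin.sum_univ_eq_sum_range (fun l => ((i.val.choose l *
      j.val.choose ((2 ^ n - l + x) % 2 ^ n) : ℕ) : ZMod 2)) _).trans
    (sum_cast_choose_mul_choose_cyclic_eq_zero i.isLt j.isLt x.isLt hij)

theorem ZMod.sum_filter_eq_one_eq_sum_mul {ι : Type*} (s : Finset ι) (c f : ι → ZMod 2) :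
    ∑ l ∈ s.filter (c · = 1), f l = ∑ l ∈ s, c l * f l := by
  rw [sum_filter]
  refine sum_congr rfl fun l _ => ?_
  have hbit : ∀ a : ZMod 2, a = 0 ∨ a = 1 := by decide
  rcases hbit (c l) with h | h <;> simp [h]

/-- Indices are 0-based: `k` is the paper's row `g_{k+1}` and `⟨m, _⟩` is its row `g_{m+1}`. -/
theorem stmt5 (n m : ℕ) (hm2 : m ≤ 2^n - 1)
    (k : Fin (2^n)) (hk : 2^n < (k.val + 1) + m) :
    Matrix.vecMul (polarG n k)
      (∑ l ∈ Finset.univ.filter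
          (fun l : Fin (2^n) => 1 ≤ l.val ∧
            polarG n ⟨m, by have h0 : (0:ℕ) < 2^n := Nat.two_pow_pos n; omega⟩ l = 1),
        cyc (2^n) l.val)
      = polarG n k := by
  have hm : m < 2 ^ n := by have := Nat.two_pow_pos n; omega
  funext x
  have hconv := sum_polarG_mul_polarG_sub_eq_zero ⟨m, hm⟩ k x (by simp only; omega)
  have hpos : univ.filter (fun l : Fin (2 ^ n) => 1 ≤ l.val) = univ.erase 0 := by
    ext l
    simp only [mem_filter, mem_univ, true_and, mem_erase, and_true, ne_eq, Fin.ext_iff,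
      Fin.val_zero]
    omega
  rw [← add_sum_erase _ _ (mem_univ 0), ← hpos, polarG_apply_eq_choose, Fin.val_zero,
    Nat.choose_zero_right, Nat.cast_one, one_mul, sub_zero, CharTwo.add_eq_zero] at hconv
  rw [Matrix.vecMul_sum, Finset.sum_apply]
  simp only [vecMul_cyc]
  rw [← filter_filter, ZMod.sum_filter_eq_one_eq_sum_mul]
  exact hconv.symm
end

section
/- Let G_n = F^{⊗n} with rows g_1,…,g_N (N = 2^n). If 1 ≤ k ≤ N and i = k + m ≤ N with m ≥ 1, then g_k ⊕ g_i = g_k ∑_{l : g_{i−k+1, l+1} = 1, 1 ≤ l ≤ N−1} C_N^l, i.e., adding a lower row of G_n to row g_k equals applying to g_k the sum of clockwise cyclic shifts at positions given by the support (excluding the first coordinate) of row g_{i−k+1}. -/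
open Finset Matrix

namespace Nat

theorem and_eq_left_iff_mod_two_and_div_two (x k : ℕ) :
    x &&& k = x ↔ x % 2 &&& k % 2 = x % 2 ∧ x / 2 &&& k / 2 = x / 2 := by
  have hmod : (x &&& k) % 2 = x % 2 &&& k % 2 := by simpa using and_mod_two_pow (n := 1)
  rw [← hmod, ← and_div_two]
  omega

theorem cast_choose_zmod_two_s6 (k x : ℕ) :
    (k.choose x : ZMod 2) = if x &&& k = x then 1 else 0 := by
  induction k using Nat.strong_induction_on generalizing x with
  | _ k ih =>
  rcases Nat.eq_zero_or_pos k with rfl | hk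
  · rcases x with _ | x <;> simp
  have lucas : (k.choose x : ZMod 2) =
      ((k % 2).choose (x % 2) : ZMod 2) * ((k / 2).choose (x / 2) : ZMod 2) := by
    exact_mod_cast (ZMod.intCast_eq_intCast_iff _ _ 2).mpr
      (Choose.choose_modEq_choose_mod_mul_choose_div (p := 2) (n := k) (k := x))
  have low_digit : ((k % 2).choose (x % 2) : ZMod 2) =
      if x % 2 &&& k % 2 = x % 2 then 1 else 0 := by
    rcases Nat.mod_two_eq_zero_or_one x with hx | hx <;>
      rcases Nat.mod_two_eq_zero_or_one k with hk | hk <;> rw [hx, hk] <;> decide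
  rw [lucas, low_digit, ih (k / 2) (Nat.div_lt_self hk one_lt_two), ite_zero_mul_ite_zero,
    mul_one]
  exact if_congr (and_eq_left_iff_mod_two_and_div_two x k).symm rfl rfl

end Nat

theorem polarG_apply (n : ℕ) (r j : Fin (2 ^ n)) :
    polarG n r j = (r.val.choose j.val : ZMod 2) := by
  simp [polarG, Nat.cast_choose_zmod_two_s6]

theorem cyc_zero (N : ℕ) : cyc N 0 = 1 := by
  ext i j
  simp [cyc, Matrix.one_apply, Nat.mod_eq_of_lt i.isLt, Fin.ext_iff]

theorem vecMul_cyc_apply {N : ℕ} (v : Fin N → ZMod 2) (l : ℕ) (j : Fin N) :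
    (v ᵥ* cyc N l) j = ∑ x, if (x.val + l) % N = j.val then v x else 0 := by
  simp [vecMul, dotProduct, cyc]

theorem sum_filter_eq_one_eq_sum_smul {ι M : Type*} [AddCommMonoid M] [Module (ZMod 2) M]
    (s : Finset ι) (c : ι → ZMod 2) (f : ι → M) :
    ∑ l ∈ s with c l = 1, f l = ∑ l ∈ s, c l • f l := by
  rw [sum_filter]
  refine sum_congr rfl fun l _ => ?_
  have zmod_two_cases : ∀ a : ZMod 2, a = 0 ∨ a = 1 := by decide
  rcases zmod_two_cases (c l) with h | h <;> simp [h]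

theorem sum_fin_sum_fin_ite_add_mod_eq {M : Type*} [AddCommMonoid M] {N : ℕ}
    (f : ℕ → ℕ → M) (hf : ∀ x y, N ≤ x + y → f x y = 0) {j : ℕ} (hj : j < N) :
    ∑ y : Fin N, ∑ x : Fin N, (if (x.val + y.val) % N = j then f x y else 0) =
      ∑ p ∈ antidiagonal j, f p.1 p.2 := by
  have no_wrap : ∀ x y : ℕ,
      (if (x + y) % N = j then f x y else 0) = if x + y = j then f x y else 0 := by
    intro x y
    rcases lt_or_ge (x + y) N with h | h
    · rw [Nat.mod_eq_of_lt h]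
    · simp [hf x y h]
  simp only [no_wrap]
  rw [sum_comm, ← sum_product', ← sum_filter]
  refine sum_bij (fun p _ => (p.1.val, p.2.val)) ?_ ?_ ?_ fun _ _ => rfl
  · intro p hp
    simpa using hp
  · intro p _ q _ h
    simpa [Prod.ext_iff, Fin.ext_iff] using h
  · rintro ⟨a, b⟩ h
    rw [HasAntidiagonal.mem_antidiagonal] at h
    exact ⟨(⟨a, by omega⟩, ⟨b, by omega⟩), by simpa using h, rfl⟩

theorem vecMul_sum_choose_smul_cyc {N k m : ℕ} (h : k + m < N) :
    (fun j : Fin N => (k.choose j : ZMod 2)) ᵥ* ∑ l : Fin N, (m.choose l : ZMod 2) • cyc N l =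
      fun j : Fin N => ((k + m).choose j : ZMod 2) := by
  ext j
  have vanish : ∀ x y, N ≤ x + y → (k.choose x * m.choose y : ZMod 2) = 0 := by
    intro x y hxy
    rcases lt_or_ge k x with hx | hx
    · simp [Nat.choose_eq_zero_of_lt hx]
    · simp [Nat.choose_eq_zero_of_lt (show m < y by omega)]
  rw [Nat.add_choose_eq, Nat.cast_sum]
  simp only [Nat.cast_mul]
  rw [← sum_fin_sum_fin_ite_add_mod_eq _ vanish j.isLt]
  simp only [vecMul_sum, vecMul_smul, Finset.sum_apply, Pi.smul_apply, vecMul_cyc_apply,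
    smul_eq_mul, mul_sum]
  refine sum_congr rfl fun y _ => sum_congr rfl fun x _ => ?_
  split_ifs <;> simp [mul_comm]

/-- For rows `g_k` and `g_i` of `G_n` with `i = k + m`, `m ≥ 1` (0-indexed; in
1-indexed terms `i = k + m ≤ N`), adding the lower row `g_i` to `g_k` equals applying
to `g_k` the sum of clockwise cyclic shifts at the positions of the ones of row
`g_{i−k+1}` (0-indexed row `m`), excluding the first coordinate. -/
theorem stmt6 (n m : ℕ) (k i : Fin (2^n)) (hi : i.val = k.val + m) :
    polarG n k + polarG n i =
      Matrix.vecMul (polarG n k)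
        (∑ l ∈ Finset.univ.filter
            (fun l : Fin (2^n) => 1 ≤ l.val ∧
              polarG n ⟨m, by have h0 := i.isLt; omega⟩ l = 1),
          cyc (2^n) l.val) := by
  have hN : NeZero (2 ^ n) := ⟨by positivity⟩
  have support_row_m : univ.filter (fun l : Fin (2^n) => 1 ≤ l.val ∧
      polarG n ⟨m, by omega⟩ l = 1) =
      (univ.erase 0).filter (fun l : Fin (2 ^ n) => (m.choose l : ZMod 2) = 1) := by
    ext l
    simp only [mem_filter, mem_univ, mem_erase, true_and, ne_eq, polarG_apply, Fin.ext_iff,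
      Fin.val_zero, Nat.one_le_iff_ne_zero, and_true]
  have row : ∀ r : Fin (2 ^ n), polarG n r = fun j : Fin (2 ^ n) => (r.val.choose j : ZMod 2) :=
    fun r => funext (polarG_apply n r)
  rw [support_row_m, sum_filter_eq_one_eq_sum_smul, sum_erase_eq_sub (mem_univ 0),
    Fin.val_zero, Nat.choose_zero_right, Nat.cast_one, one_smul, cyc_zero, vecMul_sub,
    vecMul_one, row k, row i, vecMul_sum_choose_smul_cyc (hi ▸ i.isLt), ← hi]
  ext j
  simp [sub_eq_add_neg, ZMod.neg_eq_self_mod_two, add_comm]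
end

section
/- Let G_n = F^{⊗n}, N = 2^n, and let v be a nonzero binary vector of length N whose first nonzero entry is in position i. For any N×N upper-triangular Toeplitz matrix T_N over 𝔽₂ with ones on the main diagonal, w(v T_N G_n) ≥ w(g_i), where g_i is the i-th row of G_n. -/
/-- The upper-triangular Toeplitz matrix determined by its first row `c`. -/
def toepT {N : ℕ} (c : Fin N → ZMod 2) : Matrix (Fin N) (Fin N) (ZMod 2) :=
  Matrix.of fun i j =>
    if h : i.val ≤ j.val then c ⟨j.val - i.val, by omega⟩ else 0

open Finset Matrix

theorem Nat.exists_testBit_and_not_of_and_ne_left {k i : ℕ} (h : k &&& i ≠ k) :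
    ∃ b, k.testBit b = true ∧ i.testBit b = false := by
  by_contra! hki
  refine h (Nat.eq_of_testBit_eq fun b => ?_)
  cases hk : k.testBit b
  · simp [Nat.testBit_and, hk]
  · simp [Nat.testBit_and, hk, hki b hk]

theorem Matrix.vecMul_apply_of_blockTriangular {ι R : Type*} [LinearOrder ι] [Fintype ι]
    [NonUnitalNonAssocSemiring R] {M : Matrix ι ι R} (hM : M.BlockTriangular id) {v : ι → R}
    {i j : ι} (hv : ∀ k < i, v k = 0) (hj : j ≤ i) : vecMul v M j = v j * M j j := by
  refine Finset.sum_eq_single j (fun k _ hkj => ?_) (by simp)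
  rcases hkj.lt_or_gt with hk | hk
  · simp [hv k (hk.trans_le hj)]
  · simp [hM hk]

theorem toepT_blockTriangular {N : ℕ} (c : Fin N → ZMod 2) : (toepT c).BlockTriangular id :=
  fun _ _ h => dif_neg (not_le.mpr h)

theorem toepT_apply_self {N : ℕ} (c : Fin N → ZMod 2) (j : Fin N) :
    toepT c j j = c ⟨0, j.pos⟩ := by
  simp [toepT]

theorem card_submask_and_eq_zmod_two {n : ℕ} {k : ℕ} (hk : k < 2 ^ n) (i t : ℕ) :
    (#{j : Fin (2 ^ n) | j.val &&& k = j.val ∧ j.val &&& i = t} : ZMod 2) =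
      if t &&& k = t ∧ k &&& i = k then 1 else 0 := by
  by_cases hki : k &&& i = k
  · have hj : ∀ j : ℕ, j &&& k = j → j &&& i = j := fun j hjk => by
      rw [← hjk, Nat.and_assoc, hki]
    by_cases htk : t &&& k = t
    · have ht : t < 2 ^ n := (htk ▸ Nat.and_le_right).trans_lt hk
      rw [if_pos ⟨htk, hki⟩, Finset.card_eq_one.mpr ⟨⟨t, ht⟩, ?_⟩, Nat.cast_one]
      ext j
      simp only [mem_filter, mem_univ, true_and, mem_singleton, Fin.ext_iff]
      refine ⟨fun ⟨hjk, hji⟩ => hji ▸ (hj j hjk).symm, fun hjt => ?_⟩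
      rw [hjt]
      exact ⟨htk, hj t htk⟩
    · rw [if_neg fun h => htk h.1, Finset.card_eq_zero.mpr, Nat.cast_zero]
      refine Finset.filter_false_of_mem fun j _ ⟨hjk, hji⟩ => htk ?_
      rwa [← hji, hj j hjk]
  · obtain ⟨b, hkb, hib⟩ := Nat.exists_testBit_and_not_of_and_ne_left hki
    have hb : 2 ^ b < 2 ^ n := (Nat.ge_two_pow_of_testBit hkb).trans_lt hk
    rw [if_neg (fun h => hki h.2), Finset.card_eq_sum_ones, Nat.cast_sum]
    refine Finset.sum_involution (fun j _ => ⟨j.val ^^^ 2 ^ b, Nat.xor_lt_two_pow j.isLt hb⟩)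
      (fun _ _ => by decide) (fun j _ _ hj => ?_) (fun j hj => ?_) (fun j _ => ?_)
    · simpa using congrArg Fin.val hj
    · simp only [mem_filter, mem_univ, true_and] at hj ⊢
      simp [Nat.and_xor_distrib_right, Nat.two_pow_and, hkb, hib, hj]
    · exact Fin.ext (Nat.xor_xor_cancel_right _ _)

theorem sum_vecMul_polarG_of_and_eq {n : ℕ} (u : Fin (2 ^ n) → ZMod 2) (i t : ℕ) :
    ∑ j : Fin (2 ^ n) with j.val &&& i = t, vecMul u (polarG n) j =
      ∑ k : Fin (2 ^ n) with t &&& k.val = t ∧ k.val &&& i = k.val, u k := by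
  calc ∑ j : Fin (2 ^ n) with j.val &&& i = t, vecMul u (polarG n) j
      = ∑ k, u k * #{j : Fin (2 ^ n) | j.val &&& k.val = j.val ∧ j.val &&& i = t} := by
        simp only [vecMul, dotProduct, polarG, of_apply, mul_ite, mul_one, mul_zero]
        rw [Finset.sum_comm]
        refine Finset.sum_congr rfl fun k _ => ?_
        rw [Finset.sum_ite, Finset.sum_const_zero, add_zero, Finset.sum_const,
          Finset.filter_filter, nsmul_eq_mul, mul_comm]
        simp only [and_comm]
    _ = ∑ k : Fin (2 ^ n) with t &&& k.val = t ∧ k.val &&& i = k.val, u k := by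
        rw [Finset.sum_filter]
        refine Finset.sum_congr rfl fun k _ => ?_
        rw [card_submask_and_eq_zmod_two k.isLt, mul_ite, mul_one, mul_zero]

theorem sum_vecMul_polarG_of_and_eq_of_leading {n : ℕ} {u : Fin (2 ^ n) → ZMod 2}
    {i : Fin (2 ^ n)} (hu : ∀ j < i, u j = 0) {t : ℕ} (ht : t &&& i.val = t) :
    ∑ j : Fin (2 ^ n) with j.val &&& i = t, vecMul u (polarG n) j = u i := by
  rw [sum_vecMul_polarG_of_and_eq, Finset.sum_eq_single i]
  · intro k hk hki
    simp only [mem_filter] at hk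
    exact hu k (lt_of_le_of_ne (Fin.le_iff_val_le_val.mpr (hk.2.2 ▸ Nat.and_le_right)) hki)
  · simp [ht]

theorem wt_polarG_le_wt_vecMul {n : ℕ} {u : Fin (2 ^ n) → ZMod 2} {i : Fin (2 ^ n)}
    (hui : u i ≠ 0) (hu : ∀ j < i, u j = 0) : wt (polarG n i) ≤ wt (vecMul u (polarG n)) := by
  have hwt : wt (polarG n i) = #{t : Fin (2 ^ n) | t.val &&& i.val = t.val} := by
    simp [wt, polarG]
  rw [hwt, wt]
  refine Finset.card_le_card_of_surjOn (fun j => ⟨j.val &&& i.val, Nat.and_lt_two_pow _ i.isLt⟩)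
    fun t ht => ?_
  simp only [coe_filter, mem_univ, true_and, Set.mem_ofPred_eq] at ht
  obtain ⟨j, hj, hwj⟩ := Finset.exists_ne_zero_of_sum_ne_zero
    ((sum_vecMul_polarG_of_and_eq_of_leading hu ht).trans_ne hui)
  exact ⟨j, by simpa using hwj, Fin.ext (by simpa using hj)⟩

/-- If the first nonzero entry of `v` is in position `i`, then for any
upper-triangular Toeplitz `T_N` with unit diagonal, `w(v T_N G_n) ≥ w(g_i)`. -/
theorem stmt10 (n : ℕ) (v : Fin (2^n) → ZMod 2) (i : Fin (2^n))
    (hvi : v i ≠ 0) (hfirst : ∀ j : Fin (2^n), j < i → v j = 0)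
    (c : Fin (2^n) → ZMod 2) (hc : c ⟨0, Nat.two_pow_pos n⟩ = 1) :
    wt (Matrix.vecMul (Matrix.vecMul v (toepT c)) (polarG n)) ≥
      wt (polarG n i) := by
  have hT := toepT_blockTriangular c
  refine wt_polarG_le_wt_vecMul ?_ fun j hj => ?_
  · rwa [vecMul_apply_of_blockTriangular hT hfirst le_rfl, toepT_apply_self, hc, mul_one]
  · rw [vecMul_apply_of_blockTriangular hT hfirst hj.le, hfirst j hj, zero_mul]
end

section
/- For any binary vector u of length N = 2^n and any l with 1 ≤ l ≤ N−1, the Hamming weight of the doubled vector satisfies w((u, u) ∑_{l ∈ S} C_{2N}^l) = 2 w(u ∑_{l' ∈ S'} C_N^{l'}) whenever S ⊆ {1,…,2N−1} contains no pair of shifts congruent modulo N, where S' = {l mod N : l ∈ S}. -/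
/-! Reducing indices mod `N` turns the cyclic shift by `l` on `ℤ/2N` into the shift by `l` on
`ℤ/N`, so `(u, u) C_{2N}^l = (u C_N^l, u C_N^l)`, and by linearity the left-hand product is the
doubled vector `(v, v)` with `v = u ∑_{l ∈ S} C_N^l`. Since `C_N^l = C_N^{l mod N}` and the
hypothesis makes `l ↦ l mod N` injective on `S`, `v` is the vector on the right. -/

open Fin.NatCast

lemma wt_append {m n : ℕ} (a : Fin m → ZMod 2) (b : Fin n → ZMod 2) :
    wt (Fin.append a b) = wt a + wt b := by
  simp only [wt, Finset.card_filter, Fin.sum_univ_add, Fin.append_left, Fin.append_right]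

lemma cyc_mod (N l : ℕ) : cyc N (l % N) = cyc N l := by
  ext i k
  simp only [cyc, Matrix.of_apply, Nat.add_mod_mod]

lemma vecMul_cyc_apply_s14 {N : ℕ} [NeZero N] (x : Fin N → ZMod 2) (l : ℕ) (k : Fin N) :
    Matrix.vecMul x (cyc N l) k = x (k - l) := by
  have hshift : ∀ i : Fin N, (i.val + l) % N = k.val ↔ i = k - l := by
    intro i
    rw [eq_sub_iff_add_eq, Fin.ext_iff, Fin.val_add, Fin.val_natCast, Nat.add_mod_mod]
  simp [Matrix.vecMul, dotProduct, cyc, hshift]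

lemma natCast_val_add_of_dvd {M N : ℕ} [NeZero N] (hNM : N ∣ M) (a b : Fin M) :
    (((a + b).val : ℕ) : Fin N) = (a.val : Fin N) + (b.val : Fin N) := by
  ext
  simp [Fin.val_add, Fin.val_natCast, Nat.mod_mod_of_dvd _ hNM, Nat.add_mod]

lemma natCast_val_sub_natCast_of_dvd {M N : ℕ} [NeZero M] [NeZero N] (hNM : N ∣ M)
    (a : Fin M) (l : ℕ) :
    (((a - l).val : ℕ) : Fin N) = (a.val : Fin N) - l := by
  have hl : (((l : Fin M).val : ℕ) : Fin N) = l := by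
    ext; simp [Fin.val_natCast, Nat.mod_mod_of_dvd _ hNM]
  rw [eq_sub_iff_add_eq, ← hl, ← natCast_val_add_of_dvd hNM, sub_add_cancel]

lemma append_self_apply {α : Type*} {N : ℕ} [NeZero N] (u : Fin N → α) (m : Fin (N + N)) :
    Fin.append u u m = u (m.val : Fin N) := by
  refine Fin.addCases (fun i => ?_) (fun i => ?_) m
  · rw [Fin.append_left, Fin.val_castAdd, Fin.cast_val_eq_self]
  · rw [Fin.append_right, Fin.val_natAdd, Nat.cast_add, Fin.natCast_self, zero_add,
      Fin.cast_val_eq_self]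

lemma append_self_vecMul_cyc {N : ℕ} [NeZero N] (u : Fin N → ZMod 2) (l : ℕ) :
    Matrix.vecMul (Fin.append u u) (cyc (N + N) l) =
      Fin.append (Matrix.vecMul u (cyc N l)) (Matrix.vecMul u (cyc N l)) := by
  have : NeZero (N + N) := ⟨by simp [NeZero.ne N]⟩
  ext m
  rw [vecMul_cyc_apply_s14, append_self_apply, append_self_apply, vecMul_cyc_apply_s14,
    natCast_val_sub_natCast_of_dvd (Dvd.intro_left 2 (two_mul N))]

lemma append_self_sum {ι α : Type*} [AddCommMonoid α] {N : ℕ} (s : Finset ι)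
    (f : ι → Fin N → α) :
    Fin.append (∑ i ∈ s, f i) (∑ i ∈ s, f i) = ∑ i ∈ s, Fin.append (f i) (f i) := by
  ext m
  refine Fin.addCases (fun j => ?_) (fun j => ?_) m <;>
    simp only [Fin.append_left, Fin.append_right, Finset.sum_apply]

theorem stmt14_general (n : ℕ) (u : Fin (2^n) → ZMod 2) (S : Finset ℕ)
    (hpair : ∀ l ∈ S, ∀ l' ∈ S, l % 2^n = l' % 2^n → l = l') :
    wt (Matrix.vecMul (Fin.append u u) (∑ l ∈ S, cyc (2^n + 2^n) l)) =
      2 * wt (Matrix.vecMul u (∑ l' ∈ S.image (· % 2^n), cyc (2^n) l')) := by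
  rw [Finset.sum_image hpair]
  simp only [cyc_mod, Matrix.vecMul_sum, append_self_vecMul_cyc, ← append_self_sum, wt_append]
  ring

/-- For `u` of length `N = 2^n` and `S ⊆ {1,…,2N−1}` containing no two shifts
congruent mod `N`, `w((u,u) ∑_{l∈S} C_{2N}^l) = 2 w(u ∑_{l'∈S'} C_N^{l'})` where
`S' = {l mod N : l ∈ S}`. -/
theorem stmt14 (n : ℕ) (u : Fin (2^n) → ZMod 2) (S : Finset ℕ)
    (hS : ∀ l ∈ S, 1 ≤ l ∧ l ≤ 2 * 2^n - 1)
    (hpair : ∀ l ∈ S, ∀ l' ∈ S, l % 2^n = l' % 2^n → l = l') :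
    wt (Matrix.vecMul (Fin.append u u) (∑ l ∈ S, cyc (2^n + 2^n) l)) =
      2 * wt (Matrix.vecMul u (∑ l' ∈ S.image (· % 2^n), cyc (2^n) l')) :=
  stmt14_general n u S hpair
end
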